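/- Let n be a positive even integer, λ, ν ∈ ℂ with (λ,ν) ∉ L̂, and ε ∈ {+1,−1}. If s ∈ V^ε(λ,ν) satisfies s(i,i) = 0 for all i ∈ ℕ, then s = 0; that is, the restriction of elements of V^ε(λ,ν) to the diagonal is injective. -/
import Mathlib


/-- Extension of `s : ℕ×ℕ → ℂ` to integer indices, with the convention that `s(i,j) = 0`
whenever `i < 0`, `j < 0` or `j > i`. -/
noncomputable def extS (s : ℕ × ℕ → ℂ) : ℤ → ℤ → ℂ :=
  fun i j => if 0 ≤ i ∧ 0 ≤ j ∧ j ≤ i then s (i.toNat, j.toNat) else 0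

lemma extS_add (a b : ℕ × ℕ → ℂ) (i j : ℤ) :
    extS (a + b) i j = extS a i j + extS b i j := by
  unfold extS; split <;> simp

lemma extS_smul (r : ℂ) (a : ℕ × ℕ → ℂ) (i j : ℤ) :
    extS (r • a) i j = r * extS a i j := by
  unfold extS; split <;> simp

/-- The space `V^ε(λ,ν)` of functions `s : ℕ×ℕ → ℂ`, vanishing for `j > i`, satisfying the
three relations (R1), (R2), (R3) for all integers `i ≥ j ≥ 0` (with the convention that
`s(i,j) = 0` whenever `i < 0`, `j < 0` or `j > i`).  Here `ρ = n/2` and `ρ_H = (n−1)/2`. -/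
noncomputable def Vsp (n : ℕ) (eps lam nu : ℂ) : Submodule ℂ (ℕ × ℕ → ℂ) where
  carrier := {s | (∀ p : ℕ × ℕ, p.1 < p.2 → s p = 0)
    ∧ (∀ i j : ℕ, j ≤ i →
        ((n : ℂ) + 2 * i - 1) * ((n : ℂ) + 2 * i + 1)
            * (nu + ((n : ℂ) - 1) / 2 + 1 / 2 + j) * s (i, j)
          = ((n : ℂ) + 2 * i - 1) * ((n : ℂ) + 2 * j - 1)
              * (lam + (n : ℂ) / 2 + 1 / 2 + i) * extS s ((i : ℤ) + 1) ((j : ℤ) + 1)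
            + eps * (-1 : ℂ) ^ (i - j + 1) * 2 * ((n : ℂ) + 2 * j - 1)
              * Complex.I * lam * extS s (i : ℤ) ((j : ℤ) + 1)
            - ((n : ℂ) + 2 * i + 1) * ((n : ℂ) + 2 * j - 1)
              * (lam - (n : ℂ) / 2 + 1 / 2 - i) * extS s ((i : ℤ) - 1) ((j : ℤ) + 1))
    ∧ (∀ i j : ℕ, j ≤ i →
        (((n : ℂ) + 2 * i - 1) * ((n : ℂ) + 2 * i + 1) * nu
            - eps * (-1 : ℂ) ^ (i - j) * ((n : ℂ) + 2 * i) * ((n : ℂ) + 2 * j - 1) * lam)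
            * s (i, j)
          = -(((i : ℂ) - j + 1)) * ((n : ℂ) + 2 * i - 1) * Complex.I
              * (lam + (n : ℂ) / 2 + 1 / 2 + i) * extS s ((i : ℤ) + 1) (j : ℤ)
            + ((n : ℂ) + 2 * i + 1) * ((n : ℂ) + i + j - 1) * Complex.I
              * (lam - (n : ℂ) / 2 + 1 / 2 - i) * extS s ((i : ℤ) - 1) (j : ℤ))
    ∧ (∀ i j : ℕ, 1 ≤ j → j ≤ i →
        ((n : ℂ) + 2 * i - 1) * ((n : ℂ) + 2 * i + 1) * ((n : ℂ) + 2 * j - 3)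
            * (nu - ((n : ℂ) - 1) / 2 + 1 / 2 - j) * s (i, j)
          = -(((i : ℂ) - j + 1)) * (((i : ℂ) - j + 2)) * ((n : ℂ) + 2 * i - 1)
              * (lam + (n : ℂ) / 2 + 1 / 2 + i) * extS s ((i : ℤ) + 1) ((j : ℤ) - 1)
            + eps * (-1 : ℂ) ^ (i - j + 1) * 2 * (((i : ℂ) - j + 1)) * ((n : ℂ) + i + j - 1)
              * Complex.I * lam * extS s (i : ℤ) ((j : ℤ) - 1)
            + ((n : ℂ) + 2 * i + 1) * ((n : ℂ) + i + j - 2) * ((n : ℂ) + i + j - 1)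
              * (lam - (n : ℂ) / 2 + 1 / 2 - i) * extS s ((i : ℤ) - 1) ((j : ℤ) - 1))}
  add_mem' := by
    rintro a b ⟨ha0, ha1, ha2, ha3⟩ ⟨hb0, hb1, hb2, hb3⟩
    refine ⟨fun p hp => by simp [Pi.add_apply, ha0 p hp, hb0 p hp], ?_, ?_, ?_⟩
    · intro i j hij
      simp only [Pi.add_apply, extS_add]
      linear_combination ha1 i j hij + hb1 i j hij
    · intro i j hij
      simp only [Pi.add_apply, extS_add]
      linear_combination ha2 i j hij + hb2 i j hij
    · intro i j h1 hij
      simp only [Pi.add_apply, extS_add]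
      linear_combination ha3 i j h1 hij + hb3 i j h1 hij
  zero_mem' := by
    refine ⟨fun p _ => rfl, ?_, ?_, ?_⟩ <;>
      · intro i j
        intros
        simp [extS]
  smul_mem' := by
    rintro r a ⟨ha0, ha1, ha2, ha3⟩
    refine ⟨fun p hp => by simp [Pi.smul_apply, ha0 p hp], ?_, ?_, ?_⟩
    · intro i j hij
      simp only [Pi.smul_apply, smul_eq_mul, extS_smul]
      linear_combination r * ha1 i j hij
    · intro i j hij
      simp only [Pi.smul_apply, smul_eq_mul, extS_smul]
      linear_combination r * ha2 i j hij
    · intro i j h1 hij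
      simp only [Pi.smul_apply, smul_eq_mul, extS_smul]
      linear_combination r * ha3 i j h1 hij

/-- The set `L̂ = {(λ,ν) : λ = -ρ-1/2-k, ν = -ρ_H-1/2-ℓ, k ≥ ℓ ≥ 0}`, where `ρ = n/2` and
`ρ_H = (n-1)/2`. -/
def Lhat (n : ℕ) : Set (ℂ × ℂ) :=
  {p | ∃ k l : ℕ, l ≤ k ∧ p.1 = -((n : ℂ) / 2) - 1 / 2 - k ∧
    p.2 = -(((n : ℂ) - 1) / 2) - 1 / 2 - l}

lemma extS_nat (s : ℕ × ℕ → ℂ) (i j : ℕ) (h : j ≤ i) :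
    extS s (i : ℤ) (j : ℤ) = s (i, j) := by
  unfold extS
  rw [if_pos (by omega)]
  simp

lemma nz1 (n i : ℕ) (hn2 : 2 ≤ n) : ((n : ℂ) + 2 * (i : ℂ) - 1) ≠ 0 := by
  intro h
  have h3 : ((n + 2 * i : ℕ) : ℂ) = ((1 : ℕ) : ℂ) := by push_cast; linear_combination h
  have := Nat.cast_inj (R := ℂ).mp h3
  omega

lemma nz2 (n i : ℕ) (hn2 : 2 ≤ n) : ((n : ℂ) + 2 * (i : ℂ) + 1) ≠ 0 := by
  intro h
  have h3 : ((n + 2 * i + 1 : ℕ) : ℂ) = ((0 : ℕ) : ℂ) := by push_cast; linear_combination h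
  have := Nat.cast_inj (R := ℂ).mp h3
  omega

/-- Column vanishing via relation (R2): if `λ + ρ + 1/2 + i ≠ 0` for all `i ≥ j`, then the
whole column `j` vanishes. -/
lemma colzero (n : ℕ) (hn2 : 2 ≤ n) (eps lam nu : ℂ) (s : ℕ × ℕ → ℂ)
    (hdiag : ∀ i : ℕ, s (i, i) = 0) (j : ℕ)
    (hA : ∀ i : ℕ, j ≤ i → lam + (n : ℂ) / 2 + 1 / 2 + i ≠ 0)
    (hR2 : ∀ i j : ℕ, j ≤ i →
        (((n : ℂ) + 2 * i - 1) * ((n : ℂ) + 2 * i + 1) * nu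
            - eps * (-1 : ℂ) ^ (i - j) * ((n : ℂ) + 2 * i) * ((n : ℂ) + 2 * j - 1) * lam)
            * s (i, j)
          = -(((i : ℂ) - j + 1)) * ((n : ℂ) + 2 * i - 1) * Complex.I
              * (lam + (n : ℂ) / 2 + 1 / 2 + i) * extS s ((i : ℤ) + 1) (j : ℤ)
            + ((n : ℂ) + 2 * i + 1) * ((n : ℂ) + i + j - 1) * Complex.I
              * (lam - (n : ℂ) / 2 + 1 / 2 - i) * extS s ((i : ℤ) - 1) (j : ℤ)) :
    ∀ i : ℕ, j ≤ i → s (i, j) = 0 := by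
  have H : ∀ m : ℕ, extS s ((j : ℤ) + (m : ℤ) - 1) (j : ℤ) = 0 ∧ s (j + m, j) = 0 := by
    intro m
    induction m with
    | zero =>
      constructor
      · exact if_neg (by push_cast; omega)
      · simpa using hdiag j
    | succ m ih =>
      constructor
      · rw [show ((j : ℤ) + ((m + 1 : ℕ) : ℤ) - 1) = ((j + m : ℕ) : ℤ) by push_cast; ring,
          extS_nat s _ _ (by omega)]
        exact ih.2
      · have h := hR2 (j + m) j (by omega)
        rw [show j + m - j = m from by omega] at h
        push_cast at h
        rw [show ((j : ℤ) + (m : ℤ) + 1) = ((j + (m + 1) : ℕ) : ℤ) by push_cast; ring,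
          extS_nat s _ _ (by omega), ih.1, ih.2] at h
        have hm1 : ((j : ℂ) + m - j + 1) ≠ 0 := by
          intro hc
          have h9 : ((m + 1 : ℕ) : ℂ) = ((0 : ℕ) : ℂ) := by push_cast; linear_combination hc
          have := Nat.cast_inj (R := ℂ).mp h9
          omega
        have hn1 : ((n : ℂ) + 2 * ((j : ℂ) + m) - 1) ≠ 0 := by
          have := nz1 n (j + m) hn2; push_cast at this; exact this
        have hA' : lam + (n : ℂ) / 2 + 1 / 2 + ((j : ℂ) + m) ≠ 0 := by
          have := hA (j + m) (by omega); push_cast at this; exact this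
        have hprod := mul_ne_zero (mul_ne_zero (mul_ne_zero hm1 hn1) Complex.I_ne_zero) hA'
        have hz : ((j : ℂ) + m - j + 1) * ((n : ℂ) + 2 * ((j : ℂ) + m) - 1) * Complex.I
            * (lam + (n : ℂ) / 2 + 1 / 2 + ((j : ℂ) + m)) * s (j + (m + 1), j) = 0 := by
          linear_combination h
        exact (mul_eq_zero.mp hz).resolve_left hprod
  intro i hi
  have h := (H (i - j)).2
  rwa [show j + (i - j) = i from by omega] at h

theorem statement10 (n : ℕ) (hn : 0 < n) (hne : Even n) (lam nu : ℂ)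
    (hL : (lam, nu) ∉ Lhat n) (eps : ℂ) (heps : eps = 1 ∨ eps = -1)
    (s : ℕ × ℕ → ℂ) (hs : s ∈ Vsp n eps lam nu) (hdiag : ∀ i : ℕ, s (i, i) = 0) :
    s = 0 := by
  obtain ⟨h0, hR1, hR2, hR3⟩ := hs
  have hn2 : 2 ≤ n := by rcases hne with ⟨r, hr⟩; omega
  by_cases hlam : ∀ k : ℕ, lam + (n : ℂ) / 2 + 1 / 2 + k ≠ 0
  · funext p
    rcases p with ⟨i, j⟩
    show s (i, j) = 0
    rcases lt_or_ge i j with h | h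
    · exact h0 (i, j) h
    · exact colzero n hn2 eps lam nu s hdiag j (fun i _ => hlam i) hR2 i h
  · push_neg at hlam
    obtain ⟨k, hk⟩ := hlam
    have hnu : ∀ l : ℕ, l ≤ k → nu + ((n : ℂ) - 1) / 2 + 1 / 2 + l ≠ 0 := by
      intro l hl h
      exact hL ⟨k, l, hl, by linear_combination hk, by linear_combination h⟩
    have hcolhigh : ∀ j : ℕ, k < j → ∀ i : ℕ, j ≤ i → s (i, j) = 0 := by
      intro j hj
      refine colzero n hn2 eps lam nu s hdiag j ?_ hR2
      intro i hi h
      have hik : (i : ℂ) = (k : ℂ) := by linear_combination h - hk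
      have := Nat.cast_inj (R := ℂ).mp hik
      omega
    have main : ∀ m : ℕ, ∀ j i : ℕ, k < j + m → j ≤ i → s (i, j) = 0 := by
      intro m
      induction m with
      | zero => intro j i hj hji; exact hcolhigh j (by omega) i hji
      | succ m ih =>
        intro j i hj hji
        by_cases h' : k < j + m
        · exact ih j i h' hji
        have hcol : ∀ x : ℤ, extS s x ((j : ℤ) + 1) = 0 := by
          intro x
          by_cases hx : 0 ≤ x ∧ 0 ≤ ((j : ℤ) + 1) ∧ ((j : ℤ) + 1) ≤ x
          · rw [show x = ((x.toNat : ℕ) : ℤ) from (Int.toNat_of_nonneg hx.1).symm,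
              show ((j : ℤ) + 1) = ((j + 1 : ℕ) : ℤ) from by push_cast; ring,
              extS_nat s _ _ (by omega)]
            exact ih (j + 1) x.toNat (by omega) (by omega)
          · exact if_neg hx
        have h1 := hR1 i j hji
        simp only [hcol] at h1
        have h1' : ((n : ℂ) + 2 * i - 1) * ((n : ℂ) + 2 * i + 1)
            * (nu + ((n : ℂ) - 1) / 2 + 1 / 2 + j) * s (i, j) = 0 := by
          rw [h1]; ring
        exact (mul_eq_zero.mp h1').resolve_left
          (mul_ne_zero (mul_ne_zero (nz1 n i hn2) (nz2 n i hn2)) (hnu j (by omega)))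
    funext p
    rcases p with ⟨i, j⟩
    show s (i, j) = 0
    rcases lt_or_ge i j with h | h
    · exact h0 (i, j) h
    · exact main (k + 1) j i (by omega) h
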